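/- (Theorem 1, optimal rate region) In the secure aggregation with an oblivious server model: (converse) every protocol satisfying correctness and server security (user security is not needed) must have L_X ≥ L, L_Y ≥ L, H(Z_k) ≥ 2L for every user k, and H(Z_Σ) ≥ K·L; (achievability) there exists a protocol with L = 1, L_X = L_Y = 1, keys Z_k taking values in (F_q)^2 and source key Z_Σ taking values in (F_q)^K, satisfying correctness, server security, and user security. Hence the optimal rate region is exactly {(R_X, R_Y, R_Z, R_{Z_Σ}) : R_X ≥ 1, R_Y ≥ 1, R_Z ≥ 2, R_{Z_Σ} ≥ K}. -/

import Mathlib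

open Classical
open scoped BigOperators

/-- Probability of the event `E` under the probability mass function `p`
on a finite sample space `Ω`. -/
noncomputable def pr {Ω : Type*} [Fintype Ω] (p : Ω → ℝ) (E : Ω → Prop) : ℝ :=
  ∑ ω, if E ω then p ω else 0

/-- Shannon entropy of the random variable `X` in base-`q` units. -/
noncomputable def ent {Ω α : Type*} [Fintype Ω] [Fintype α] (q : ℕ) (p : Ω → ℝ)
    (X : Ω → α) : ℝ :=
  -∑ a, pr p (fun ω => X ω = a) * Real.logb q (pr p (fun ω => X ω = a))

/-- Conditional entropy `H(X | Y) = H(X, Y) − H(Y)`, base `q`. -/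
noncomputable def condEnt {Ω α β : Type*} [Fintype Ω] [Fintype α] [Fintype β]
    (q : ℕ) (p : Ω → ℝ) (X : Ω → α) (Y : Ω → β) : ℝ :=
  ent q p (fun ω => (X ω, Y ω)) - ent q p Y

/-- Mutual information `I(X ; Y) = H(X) + H(Y) − H(X, Y)`, base `q`. -/
noncomputable def mutInf {Ω α β : Type*} [Fintype Ω] [Fintype α] [Fintype β]
    (q : ℕ) (p : Ω → ℝ) (X : Ω → α) (Y : Ω → β) : ℝ :=
  ent q p X + ent q p Y - ent q p (fun ω => (X ω, Y ω))

/-- Conditional mutual information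
`I(X ; Y | Z) = H(X, Z) + H(Y, Z) − H(X, Y, Z) − H(Z)`, base `q`. -/
noncomputable def condMutInf {Ω α β γ : Type*} [Fintype Ω] [Fintype α] [Fintype β] [Fintype γ]
    (q : ℕ) (p : Ω → ℝ) (X : Ω → α) (Y : Ω → β) (Z : Ω → γ) : ℝ :=
  ent q p (fun ω => (X ω, Z ω)) + ent q p (fun ω => (Y ω, Z ω))
    - ent q p (fun ω => (X ω, Y ω, Z ω)) - ent q p Z

set_option linter.unusedVariables false
set_option linter.unusedSectionVars false
set_option maxHeartbeats 1000000

noncomputable def phi (q : ℕ) (x : ℝ) : ℝ := -(x * Real.logb q x)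

section SecAggLib
variable {Ω : Type*} [Fintype Ω] {α β γ δ : Type*} [Fintype α] [Fintype β] [Fintype γ] [Fintype δ]
variable {q : ℕ} {p : Ω → ℝ}

lemma pr_nonneg (hp : ∀ ω, 0 ≤ p ω) (E : Ω → Prop) : 0 ≤ pr p E :=
  Finset.sum_nonneg fun ω _ => by by_cases h : E ω <;> simp [pr, h, hp ω]

lemma pr_congr {E E' : Ω → Prop} (h : ∀ ω, p ω ≠ 0 → (E ω ↔ E' ω)) : pr p E = pr p E' := by
  refine Finset.sum_congr rfl fun ω _ => ?_
  by_cases hz : p ω = 0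
  · by_cases h1 : E ω <;> by_cases h2 : E' ω <;> simp [h1, h2, hz]
  · rw [h ω hz]

lemma pr_congr' {E E' : Ω → Prop} (h : ∀ ω, E ω ↔ E' ω) : pr p E = pr p E' :=
  pr_congr fun ω _ => h ω

lemma pr_mono (hp : ∀ ω, 0 ≤ p ω) {E E' : Ω → Prop} (h : ∀ ω, E ω → E' ω) :
    pr p E ≤ pr p E' := by
  refine Finset.sum_le_sum fun ω _ => ?_
  by_cases h1 : E ω
  · simp [h1, h ω h1]
  · by_cases h2 : E' ω <;> simp [h1, h2, hp ω]

lemma pr_false : pr p (fun _ => False) = 0 := by simp [pr]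

lemma pr_pos_of (hp : ∀ ω, 0 ≤ p ω) {E : Ω → Prop} {ω₀ : Ω} (h0 : 0 < p ω₀) (hE : E ω₀) :
    0 < pr p E := by
  have : p ω₀ ≤ pr p E := by
    have := Finset.single_le_sum (f := fun ω => if E ω then p ω else 0)
      (fun ω _ => by by_cases h : E ω <;> simp [h, hp ω]) (Finset.mem_univ ω₀)
    simpa [hE, pr] using this
  linarith

lemma pr_pos_elim (hp : ∀ ω, 0 ≤ p ω) {E : Ω → Prop} (h : 0 < pr p E) :
    ∃ ω, 0 < p ω ∧ E ω := by
  by_contra hc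
  push_neg at hc
  have : pr p E ≤ 0 := by
    refine Finset.sum_nonpos fun ω _ => ?_
    by_cases h1 : E ω
    · have := hc ω
      have hple : p ω ≤ 0 := by
        by_contra hpp
        push_neg at hpp
        exact absurd h1 (by simpa using (this hpp))
      simp [h1, hple]
    · simp [h1]
  linarith

lemma prComp (T : Ω → α) (S : α → Prop) :
    pr p (fun ω => S (T ω)) = ∑ a, if S a then pr p (fun ω => T ω = a) else 0 := by
  have h1 : ∀ a, (if S a then pr p (fun ω => T ω = a) else 0)
      = ∑ ω, if S a ∧ T ω = a then p ω else 0 := by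
    intro a; by_cases h : S a <;> simp [pr, h]
  calc pr p (fun ω => S (T ω)) = ∑ ω, ∑ a, if S a ∧ T ω = a then p ω else 0 := by
        refine Finset.sum_congr rfl fun ω _ => ?_
        rw [Finset.sum_eq_single (T ω)]
        · by_cases h : S (T ω) <;> simp [h]
        · exact fun b _ hb => if_neg (fun hh => hb hh.2.symm)
        · simp
    _ = ∑ a, ∑ ω, if S a ∧ T ω = a then p ω else 0 := Finset.sum_comm
    _ = ∑ a, if S a then pr p (fun ω => T ω = a) else 0 :=
        Finset.sum_congr rfl fun a _ => (h1 a).symm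

lemma pr_fiber (T : Ω → α) (C : Ω → Prop) :
    pr p C = ∑ a, pr p (fun ω => C ω ∧ T ω = a) := by
  calc pr p C = ∑ ω, ∑ a, if C ω ∧ T ω = a then p ω else 0 := by
        refine Finset.sum_congr rfl fun ω _ => ?_
        rw [Finset.sum_eq_single (T ω)]
        · by_cases h : C ω <;> simp [h]
        · exact fun b _ hb => if_neg (fun hh => hb hh.2.symm)
        · simp
    _ = ∑ a, ∑ ω, if C ω ∧ T ω = a then p ω else 0 := Finset.sum_comm
    _ = ∑ a, pr p (fun ω => C ω ∧ T ω = a) := by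
        refine Finset.sum_congr rfl fun a _ => ?_
        unfold pr
        exact Finset.sum_congr rfl fun ω _ => by congr

lemma sum_pr_eq_one (hp1 : ∑ ω, p ω = 1) (T : Ω → α) :
    ∑ a, pr p (fun ω => T ω = a) = 1 := by
  unfold pr
  rw [Finset.sum_comm, ← hp1]
  refine Finset.sum_congr rfl fun ω _ => ?_
  rw [Finset.sum_eq_single (T ω)] <;> simp +contextual [eq_comm]


lemma phi_zero : phi q 0 = 0 := by simp [phi]

lemma ent_eq (X : Ω → α) : ent q p X = ∑ a, phi q (pr p (fun ω => X ω = a)) := by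
  rw [ent, ← Finset.sum_neg_distrib]; rfl

lemma entOfDetEmbed (hp : ∀ ω, 0 ≤ p ω) {A : Ω → α} {B : Ω → β} (e : α → β)
    (he : Function.Injective e) (hd : ∀ ω, p ω ≠ 0 → B ω = e (A ω)) :
    ent q p B = ent q p A := by
  have h1 : ∀ a, pr p (fun ω => B ω = e a) = pr p (fun ω => A ω = a) := fun a =>
    pr_congr fun ω hz =>
      ⟨fun h => he (by rw [← hd ω hz]; exact h), fun h => by rw [hd ω hz, h]⟩
  have h2 : ∀ b, (∀ a, b ≠ e a) → pr p (fun ω => B ω = b) = 0 := by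
    intro b hb
    rw [pr_congr (E' := fun _ => False) ?_, pr_false]
    intro ω hz
    simp only [iff_false]
    intro h
    exact hb (A ω) (by rw [← hd ω hz, h])
  rw [ent_eq, ent_eq]
  rw [← Finset.sum_subset (Finset.subset_univ ((Finset.univ : Finset α).image e))]
  · rw [Finset.sum_image (fun a _ a' _ h => he h)]
    exact Finset.sum_congr rfl fun a _ => by rw [h1]
  · intro b _ hb
    have hnb : ∀ a, b ≠ e a := fun a ha =>
      hb (Finset.mem_image.mpr ⟨a, Finset.mem_univ _, ha.symm⟩)
    rw [h2 b hnb, phi_zero]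

lemma ent_pair_comm (hp : ∀ ω, 0 ≤ p ω) (A : Ω → α) (B : Ω → β) :
    ent q p (fun ω => (A ω, B ω)) = ent q p (fun ω => (B ω, A ω)) := by
  refine entOfDetEmbed (A := fun ω => (B ω, A ω)) (B := fun ω => (A ω, B ω)) hp
    (fun (c : β × α) => (c.2, c.1)) ?_ ?_
  · intro c c' h
    exact Prod.ext (congrArg Prod.snd h) (congrArg Prod.fst h)
  · intro ω _; rfl

lemma pr_pair_eq (A : Ω → α) (B : Ω → β) (a : α) (b : β) :
    pr p (fun ω => (A ω, B ω) = (a, b)) = pr p (fun ω => A ω = a ∧ B ω = b) :=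
  pr_congr' fun ω => by simp [Prod.ext_iff]

lemma ent_pair_eq (A : Ω → α) (B : Ω → β) :
    ent q p (fun ω => (A ω, B ω))
      = ∑ a, ∑ b, phi q (pr p (fun ω => A ω = a ∧ B ω = b)) := by
  rw [ent_eq, Fintype.sum_prod_type]
  exact Finset.sum_congr rfl fun a _ => Finset.sum_congr rfl fun b _ => by
    rw [pr_pair_eq]

lemma pr_marg_right (A : Ω → α) (B : Ω → β) (b : β) :
    pr p (fun ω => B ω = b) = ∑ a, pr p (fun ω => A ω = a ∧ B ω = b) := by
  rw [pr_fiber A (fun ω => B ω = b)]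
  exact Finset.sum_congr rfl fun a _ => pr_congr' fun ω => and_comm

lemma pr_marg_left (A : Ω → α) (B : Ω → β) (a : α) :
    pr p (fun ω => A ω = a) = ∑ b, pr p (fun ω => A ω = a ∧ B ω = b) :=
  pr_fiber B (fun ω => A ω = a)

lemma phi_ge_aux (hq : 1 < (q : ℝ)) {x c : ℝ} (hx : 0 ≤ x) (hxc : x ≤ c) :
    -(x * Real.logb q c) ≤ phi q x := by
  rcases eq_or_lt_of_le hx with h | h
  · simp [← h, phi]
  · have hl : Real.logb q x ≤ Real.logb q c := Real.logb_le_logb_of_le hq h hxc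
    unfold phi
    nlinarith

lemma phi_eq_aux (hq : 1 < (q : ℝ)) {x c : ℝ} (hx : 0 < x) (hxc : x ≤ c)
    (heq : -(x * Real.logb q c) = phi q x) : x = c := by
  by_contra hne
  have hlt : x < c := lt_of_le_of_ne hxc hne
  have := Real.logb_lt_logb hq hx hlt
  unfold phi at heq
  nlinarith

lemma ent_right_decomp (A : Ω → α) (B : Ω → β) :
    ent q p B = ∑ a, ∑ b,
      -((pr p (fun ω => A ω = a ∧ B ω = b)) * Real.logb q (pr p (fun ω => B ω = b))) := by
  rw [ent_eq, Finset.sum_comm]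
  refine Finset.sum_congr rfl fun b _ => ?_
  have h := pr_marg_right (p := p) A B b
  calc phi q (pr p fun ω => B ω = b)
      = -((∑ a, pr p fun ω => A ω = a ∧ B ω = b) * Real.logb q (pr p fun ω => B ω = b)) := by
        rw [phi, ← h]
    _ = ∑ a, -((pr p fun ω => A ω = a ∧ B ω = b) * Real.logb q (pr p fun ω => B ω = b)) := by
        rw [Finset.sum_mul, Finset.sum_neg_distrib]

lemma ent_right_le_pair (hq : 1 < (q : ℝ)) (hp : ∀ ω, 0 ≤ p ω) (A : Ω → α) (B : Ω → β) :
    ent q p B ≤ ent q p (fun ω => (A ω, B ω)) := by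
  rw [ent_pair_eq, ent_right_decomp A B]
  refine Finset.sum_le_sum fun a _ => Finset.sum_le_sum fun b _ => ?_
  exact phi_ge_aux hq (pr_nonneg hp _) (pr_mono hp fun ω h => h.2)

lemma ent_left_le_pair (hq : 1 < (q : ℝ)) (hp : ∀ ω, 0 ≤ p ω) (A : Ω → α) (B : Ω → β) :
    ent q p A ≤ ent q p (fun ω => (A ω, B ω)) := by
  rw [ent_pair_comm hp]
  exact ent_right_le_pair hq hp B A

lemma ent_mono_det (hq : 1 < (q : ℝ)) (hp : ∀ ω, 0 ≤ p ω) {A : Ω → α} {B : Ω → β}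
    (f : β → α) (h : ∀ ω, p ω ≠ 0 → A ω = f (B ω)) : ent q p A ≤ ent q p B := by
  have h1 : ent q p (fun ω => (A ω, B ω)) = ent q p B := by
    refine entOfDetEmbed hp (fun b => (f b, b)) ?_ ?_
    · intro b b' hh
      exact congrArg Prod.snd hh
    · intro ω hz
      rw [h ω hz]
  calc ent q p A ≤ ent q p (fun ω => (A ω, B ω)) := ent_left_le_pair hq hp A B
    _ = ent q p B := h1

lemma det_of_pair_ent_eq (hq : 1 < (q : ℝ)) (hp : ∀ ω, 0 ≤ p ω) {A : Ω → α} {B : Ω → β}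
    (h : ent q p (fun ω => (A ω, B ω)) = ent q p B) :
    ∀ ω ω', 0 < p ω → 0 < p ω' → B ω = B ω' → A ω = A ω' := by
  have key : ∀ a b,
      phi q (pr p (fun ω => A ω = a ∧ B ω = b))
        = -((pr p (fun ω => A ω = a ∧ B ω = b)) * Real.logb q (pr p (fun ω => B ω = b))) := by
    have hsum : ∑ a, ∑ b, (phi q (pr p (fun ω => A ω = a ∧ B ω = b))
        - (-((pr p (fun ω => A ω = a ∧ B ω = b)) * Real.logb q (pr p (fun ω => B ω = b))))) = 0 := by
      rw [Finset.sum_congr rfl (fun a _ => Finset.sum_sub_distrib _ _), Finset.sum_sub_distrib]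
      rw [← ent_pair_eq, ← ent_right_decomp, h, sub_self]
    have hnn : ∀ a b, 0 ≤ phi q (pr p (fun ω => A ω = a ∧ B ω = b))
        - (-((pr p (fun ω => A ω = a ∧ B ω = b)) * Real.logb q (pr p (fun ω => B ω = b)))) :=
      fun a b => sub_nonneg.mpr (phi_ge_aux hq (pr_nonneg hp _) (pr_mono hp fun ω hh => hh.2))
    intro a b
    have houter := (Finset.sum_eq_zero_iff_of_nonneg
      (fun a _ => Finset.sum_nonneg fun b _ => hnn a b)).mp hsum a (Finset.mem_univ a)
    have hinner := (Finset.sum_eq_zero_iff_of_nonneg (fun b _ => hnn a b)).mp houter b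
      (Finset.mem_univ b)
    linarith [hinner]
  intro ω ω' hω hω' hB
  by_contra hA
  set b := B ω with hbdef
  have hpos1 : 0 < pr p (fun ω'' => A ω'' = A ω ∧ B ω'' = b) :=
    pr_pos_of hp hω ⟨rfl, rfl⟩
  have hpos2 : 0 < pr p (fun ω'' => A ω'' = A ω' ∧ B ω'' = b) :=
    pr_pos_of hp hω' ⟨rfl, hB.symm⟩
  have hb1 : pr p (fun ω'' => A ω'' = A ω ∧ B ω'' = b) = pr p (fun ω'' => B ω'' = b) :=
    phi_eq_aux hq hpos1 (pr_mono hp fun ω'' hh => hh.2) (key (A ω) b).symm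
  have hb2 : pr p (fun ω'' => A ω'' = A ω' ∧ B ω'' = b) = pr p (fun ω'' => B ω'' = b) :=
    phi_eq_aux hq hpos2 (pr_mono hp fun ω'' hh => hh.2) (key (A ω') b).symm
  have hsum2 : pr p (fun ω'' => A ω'' = A ω ∧ B ω'' = b)
      + pr p (fun ω'' => A ω'' = A ω' ∧ B ω'' = b) ≤ pr p (fun ω'' => B ω'' = b) := by
    rw [pr_marg_right A B b]
    have hsub : ({A ω, A ω'} : Finset α) ⊆ Finset.univ := Finset.subset_univ _
    calc pr p (fun ω'' => A ω'' = A ω ∧ B ω'' = b)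
          + pr p (fun ω'' => A ω'' = A ω' ∧ B ω'' = b)
        = ∑ a ∈ ({A ω, A ω'} : Finset α), pr p (fun ω'' => A ω'' = a ∧ B ω'' = b) := by
          rw [Finset.sum_pair hA]
      _ ≤ ∑ a, pr p (fun ω'' => A ω'' = a ∧ B ω'' = b) :=
          Finset.sum_le_sum_of_subset_of_nonneg hsub fun a _ _ => pr_nonneg hp _
  have : pr p (fun ω'' => B ω'' = b) ≤ 0 := by linarith
  linarith


lemma phi_log (hq : 1 < (q : ℝ)) (x : ℝ) : phi q x * Real.log q = -(x * Real.log x) := by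
  have hlq : Real.log q ≠ 0 := ne_of_gt (Real.log_pos hq)
  unfold phi Real.logb
  field_simp

lemma gibbs_ineq {x u : ℝ} (hx : 0 ≤ x) (hu : 0 ≤ u) (hpos : 0 < x → 0 < u) :
    x - u ≤ x * (Real.log x - Real.log u) := by
  rcases eq_or_lt_of_le hx with h | h
  · rw [← h]; simpa using hu
  · have hu' := hpos h
    have hr : 0 < u / x := div_pos hu' h
    have h1 := Real.log_le_sub_one_of_pos hr
    have hlog : Real.log (u / x) = Real.log u - Real.log x := Real.log_div (ne_of_gt hu') (ne_of_gt h)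
    have h3 : x * (u / x - 1) = u - x := by field_simp
    nlinarith

lemma gibbs_eq {x u : ℝ} (hx : 0 ≤ x) (hu : 0 ≤ u) (hpos : 0 < x → 0 < u)
    (heq : x * (Real.log x - Real.log u) = x - u) : x = u := by
  rcases eq_or_lt_of_le hx with h | h
  · rw [← h] at heq ⊢
    simp only [zero_mul, zero_sub] at heq
    have h0 : u = 0 := by linarith
    simp [h0]
  · by_contra hne
    have hu' := hpos h
    have hr : 0 < u / x := div_pos hu' h
    have hrne : u / x ≠ 1 := by
      intro h1
      exact hne ((div_eq_one_iff_eq (ne_of_gt h)).mp h1).symm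
    have h1 := Real.log_lt_sub_one_of_pos hr hrne
    have hlog : Real.log (u / x) = Real.log u - Real.log x := Real.log_div (ne_of_gt hu') (ne_of_gt h)
    have h3 : x * (u / x - 1) = u - x := by field_simp
    nlinarith

lemma mutInf_core (hq : 1 < (q : ℝ)) (hp : ∀ ω, 0 ≤ p ω) (hp1 : ∑ ω, p ω = 1)
    (A : Ω → α) (B : Ω → β) :
    (ent q p A + ent q p B - ent q p (fun ω => (A ω, B ω))) * Real.log q
      = ∑ a, ∑ b, (pr p (fun ω => A ω = a ∧ B ω = b))
          * (Real.log (pr p (fun ω => A ω = a ∧ B ω = b))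
             - Real.log (pr p (fun ω => A ω = a) * pr p (fun ω => B ω = b))) := by
  have hA : ent q p A * Real.log q
      = -∑ a, ∑ b, (pr p (fun ω => A ω = a ∧ B ω = b)) * Real.log (pr p (fun ω => A ω = a)) := by
    rw [ent_eq, Finset.sum_mul, ← Finset.sum_neg_distrib]
    refine Finset.sum_congr rfl fun a _ => ?_
    rw [phi_log hq]
    nth_rewrite 1 [pr_marg_left A B a]
    rw [Finset.sum_mul, ← Finset.sum_neg_distrib]
  have hB : ent q p B * Real.log q
      = -∑ b, ∑ a, (pr p (fun ω => A ω = a ∧ B ω = b)) * Real.log (pr p (fun ω => B ω = b)) := by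
    rw [ent_eq, Finset.sum_mul, ← Finset.sum_neg_distrib]
    refine Finset.sum_congr rfl fun b _ => ?_
    rw [phi_log hq]
    nth_rewrite 1 [pr_marg_right A B b]
    rw [Finset.sum_mul, ← Finset.sum_neg_distrib]
  have hAB : ent q p (fun ω => (A ω, B ω)) * Real.log q
      = -∑ a, ∑ b, (pr p (fun ω => A ω = a ∧ B ω = b))
          * Real.log (pr p (fun ω => A ω = a ∧ B ω = b)) := by
    rw [ent_pair_eq, Finset.sum_mul, ← Finset.sum_neg_distrib]
    refine Finset.sum_congr rfl fun a _ => ?_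
    rw [Finset.sum_mul, ← Finset.sum_neg_distrib]
    exact Finset.sum_congr rfl fun b _ => phi_log hq _
  have hBcomm : (∑ b, ∑ a, (pr p (fun ω => A ω = a ∧ B ω = b))
        * Real.log (pr p (fun ω => B ω = b)))
      = ∑ a, ∑ b, (pr p (fun ω => A ω = a ∧ B ω = b)) * Real.log (pr p (fun ω => B ω = b)) :=
    Finset.sum_comm
  have hlogmul : ∀ a b, (pr p (fun ω => A ω = a ∧ B ω = b))
      * Real.log (pr p (fun ω => A ω = a) * pr p (fun ω => B ω = b))
      = (pr p (fun ω => A ω = a ∧ B ω = b)) * Real.log (pr p (fun ω => A ω = a))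
        + (pr p (fun ω => A ω = a ∧ B ω = b)) * Real.log (pr p (fun ω => B ω = b)) := by
    intro a b
    by_cases hz : pr p (fun ω => A ω = a) = 0
    · have : pr p (fun ω => A ω = a ∧ B ω = b) = 0 := by
        have hle : pr p (fun ω => A ω = a ∧ B ω = b) ≤ 0 := hz ▸ pr_mono hp fun ω hh => hh.1
        linarith [pr_nonneg hp (fun ω => A ω = a ∧ B ω = b)]
      simp [this]
    · by_cases hz2 : pr p (fun ω => B ω = b) = 0
      · have : pr p (fun ω => A ω = a ∧ B ω = b) = 0 := by
          have hle : pr p (fun ω => A ω = a ∧ B ω = b) ≤ 0 := hz2 ▸ pr_mono hp fun ω hh => hh.2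
          linarith [pr_nonneg hp (fun ω => A ω = a ∧ B ω = b)]
        simp [this]
      · rw [Real.log_mul hz hz2]; ring
  have hsplit : ∑ a, ∑ b, ((pr p (fun ω => A ω = a ∧ B ω = b))
        * Real.log (pr p (fun ω => A ω = a ∧ B ω = b))
        - ((pr p (fun ω => A ω = a ∧ B ω = b)) * Real.log (pr p (fun ω => A ω = a))
           + (pr p (fun ω => A ω = a ∧ B ω = b)) * Real.log (pr p (fun ω => B ω = b))))
      = (∑ a, ∑ b, (pr p (fun ω => A ω = a ∧ B ω = b))
          * Real.log (pr p (fun ω => A ω = a ∧ B ω = b)))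
        - ((∑ a, ∑ b, (pr p (fun ω => A ω = a ∧ B ω = b)) * Real.log (pr p (fun ω => A ω = a)))
           + (∑ a, ∑ b, (pr p (fun ω => A ω = a ∧ B ω = b))
               * Real.log (pr p (fun ω => B ω = b)))) := by
    simp [Finset.sum_sub_distrib, Finset.sum_add_distrib]
  have hexp : (∑ a, ∑ b, (pr p (fun ω => A ω = a ∧ B ω = b))
        * (Real.log (pr p (fun ω => A ω = a ∧ B ω = b))
           - Real.log (pr p (fun ω => A ω = a) * pr p (fun ω => B ω = b))))
      = (∑ a, ∑ b, (pr p (fun ω => A ω = a ∧ B ω = b))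
          * Real.log (pr p (fun ω => A ω = a ∧ B ω = b)))
        - ((∑ a, ∑ b, (pr p (fun ω => A ω = a ∧ B ω = b)) * Real.log (pr p (fun ω => A ω = a)))
           + (∑ a, ∑ b, (pr p (fun ω => A ω = a ∧ B ω = b))
               * Real.log (pr p (fun ω => B ω = b)))) := by
    rw [← hsplit]
    refine Finset.sum_congr rfl fun a _ => Finset.sum_congr rfl fun b _ => ?_
    rw [mul_sub, hlogmul a b]
  rw [hexp, sub_mul, add_mul, hA, hB, hAB, hBcomm]
  ring

lemma ent_pair_le_add (hq : 1 < (q : ℝ)) (hp : ∀ ω, 0 ≤ p ω) (hp1 : ∑ ω, p ω = 1)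
    (A : Ω → α) (B : Ω → β) :
    ent q p (fun ω => (A ω, B ω)) ≤ ent q p A + ent q p B := by
  have hcore := mutInf_core hq hp hp1 A B
  have hterm : ∀ a b, pr p (fun ω => A ω = a ∧ B ω = b)
      - pr p (fun ω => A ω = a) * pr p (fun ω => B ω = b)
      ≤ pr p (fun ω => A ω = a ∧ B ω = b)
        * (Real.log (pr p (fun ω => A ω = a ∧ B ω = b))
           - Real.log (pr p (fun ω => A ω = a) * pr p (fun ω => B ω = b))) := by
    intro a b
    refine gibbs_ineq (pr_nonneg hp _) (mul_nonneg (pr_nonneg hp _) (pr_nonneg hp _)) ?_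
    intro hxp
    exact mul_pos (lt_of_lt_of_le hxp (pr_mono hp fun ω hh => hh.1))
      (lt_of_lt_of_le hxp (pr_mono hp fun ω hh => hh.2))
  have hsumAB : ∑ a, ∑ b, pr p (fun ω => A ω = a ∧ B ω = b) = 1 := by
    rw [Finset.sum_congr rfl (fun a _ => (pr_marg_left A B a).symm)]
    exact sum_pr_eq_one hp1 A
  have hsumP : ∑ a, ∑ b, pr p (fun ω => A ω = a) * pr p (fun ω => B ω = b) = 1 := by
    rw [← Finset.sum_mul_sum]
    rw [sum_pr_eq_one hp1 A, sum_pr_eq_one hp1 B, one_mul]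
  have hsum0 : ∑ a, ∑ b, (pr p (fun ω => A ω = a ∧ B ω = b)
      - pr p (fun ω => A ω = a) * pr p (fun ω => B ω = b)) = 0 := by
    simp only [Finset.sum_sub_distrib]
    rw [hsumAB, hsumP, sub_self]
  have hge : 0 ≤ (ent q p A + ent q p B - ent q p (fun ω => (A ω, B ω))) * Real.log q := by
    rw [hcore, ← hsum0]
    exact Finset.sum_le_sum fun a _ => Finset.sum_le_sum fun b _ => hterm a b
  nlinarith [Real.log_pos hq]

lemma indep_of_mutInf_zero (hq : 1 < (q : ℝ)) (hp : ∀ ω, 0 ≤ p ω) (hp1 : ∑ ω, p ω = 1)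
    {A : Ω → α} {B : Ω → β}
    (h : ent q p A + ent q p B - ent q p (fun ω => (A ω, B ω)) = 0) :
    ∀ a b, pr p (fun ω => A ω = a ∧ B ω = b)
      = pr p (fun ω => A ω = a) * pr p (fun ω => B ω = b) := by
  have hcore := mutInf_core hq hp hp1 A B
  rw [h, zero_mul] at hcore
  have hterm : ∀ a b, pr p (fun ω => A ω = a ∧ B ω = b)
      - pr p (fun ω => A ω = a) * pr p (fun ω => B ω = b)
      ≤ pr p (fun ω => A ω = a ∧ B ω = b)
        * (Real.log (pr p (fun ω => A ω = a ∧ B ω = b))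
           - Real.log (pr p (fun ω => A ω = a) * pr p (fun ω => B ω = b))) := by
    intro a b
    refine gibbs_ineq (pr_nonneg hp _) (mul_nonneg (pr_nonneg hp _) (pr_nonneg hp _)) ?_
    intro hxp
    exact mul_pos (lt_of_lt_of_le hxp (pr_mono hp fun ω hh => hh.1))
      (lt_of_lt_of_le hxp (pr_mono hp fun ω hh => hh.2))
  have hsumAB : ∑ a, ∑ b, pr p (fun ω => A ω = a ∧ B ω = b) = 1 := by
    rw [Finset.sum_congr rfl (fun a _ => (pr_marg_left A B a).symm)]
    exact sum_pr_eq_one hp1 A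
  have hsumP : ∑ a, ∑ b, pr p (fun ω => A ω = a) * pr p (fun ω => B ω = b) = 1 := by
    rw [← Finset.sum_mul_sum]
    rw [sum_pr_eq_one hp1 A, sum_pr_eq_one hp1 B, one_mul]
  have hzero : ∑ a, ∑ b, (pr p (fun ω => A ω = a ∧ B ω = b)
      * (Real.log (pr p (fun ω => A ω = a ∧ B ω = b))
         - Real.log (pr p (fun ω => A ω = a) * pr p (fun ω => B ω = b)))
      - (pr p (fun ω => A ω = a ∧ B ω = b)
         - pr p (fun ω => A ω = a) * pr p (fun ω => B ω = b))) = 0 := by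
    simp only [Finset.sum_sub_distrib]
    rw [← hcore, hsumAB, hsumP]
    ring
  have hnn : ∀ a b, 0 ≤ pr p (fun ω => A ω = a ∧ B ω = b)
      * (Real.log (pr p (fun ω => A ω = a ∧ B ω = b))
         - Real.log (pr p (fun ω => A ω = a) * pr p (fun ω => B ω = b)))
      - (pr p (fun ω => A ω = a ∧ B ω = b)
         - pr p (fun ω => A ω = a) * pr p (fun ω => B ω = b)) :=
    fun a b => sub_nonneg.mpr (hterm a b)
  intro a b
  have houter := (Finset.sum_eq_zero_iff_of_nonneg
    (fun a _ => Finset.sum_nonneg fun b _ => hnn a b)).mp hzero a (Finset.mem_univ a)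
  have hinner := (Finset.sum_eq_zero_iff_of_nonneg (fun b _ => hnn a b)).mp houter b
    (Finset.mem_univ b)
  refine gibbs_eq (pr_nonneg hp _) (mul_nonneg (pr_nonneg hp _) (pr_nonneg hp _)) ?_ ?_
  · intro hxp
    exact mul_pos (lt_of_lt_of_le hxp (pr_mono hp fun ω hh => hh.1))
      (lt_of_lt_of_le hxp (pr_mono hp fun ω hh => hh.2))
  · linarith [hinner]

lemma phi_mul (x y : ℝ) : phi q (x * y) = y * phi q x + x * phi q y := by
  by_cases hx : x = 0
  · simp [phi, hx]
  by_cases hy : y = 0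
  · simp [phi, hy]
  unfold phi
  rw [Real.logb_mul hx hy]
  ring

lemma ent_pair_of_indep (hp1 : ∑ ω, p ω = 1) (A : Ω → α) (B : Ω → β)
    (h : ∀ a b, pr p (fun ω => A ω = a ∧ B ω = b)
      = pr p (fun ω => A ω = a) * pr p (fun ω => B ω = b)) :
    ent q p (fun ω => (A ω, B ω)) = ent q p A + ent q p B := by
  rw [ent_pair_eq, ent_eq (q := q) A, ent_eq (q := q) B]
  calc ∑ a, ∑ b, phi q (pr p (fun ω => A ω = a ∧ B ω = b))
      = ∑ a, ∑ b, (pr p (fun ω => B ω = b) * phi q (pr p (fun ω => A ω = a))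
          + pr p (fun ω => A ω = a) * phi q (pr p (fun ω => B ω = b))) := by
        refine Finset.sum_congr rfl fun a _ => Finset.sum_congr rfl fun b _ => ?_
        rw [h a b, phi_mul]
    _ = ∑ a, (phi q (pr p (fun ω => A ω = a))
          + pr p (fun ω => A ω = a) * ∑ b, phi q (pr p (fun ω => B ω = b))) := by
        refine Finset.sum_congr rfl fun a _ => ?_
        rw [Finset.sum_add_distrib, ← Finset.sum_mul, ← Finset.mul_sum,
          sum_pr_eq_one hp1 B, one_mul]
    _ = ∑ a, phi q (pr p (fun ω => A ω = a)) + ∑ b, phi q (pr p (fun ω => B ω = b)) := by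
        rw [Finset.sum_add_distrib, ← Finset.sum_mul, sum_pr_eq_one hp1 A, one_mul]

lemma ent_le_logb_card (hq : 1 < (q : ℝ)) (hp : ∀ ω, 0 ≤ p ω) (hp1 : ∑ ω, p ω = 1)
    (X : Ω → α) : ent q p X ≤ Real.logb q (Fintype.card α) := by
  rcases isEmpty_or_nonempty α with hα | hα
  · exact absurd (sum_pr_eq_one hp1 X) (by simp)
  have hN : (0 : ℝ) < (Fintype.card α : ℝ) := by
    exact_mod_cast Fintype.card_pos
  have h1 : ∀ a : α, pr p (fun ω => X ω = a) - 1 / (Fintype.card α : ℝ)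
      ≤ pr p (fun ω => X ω = a) * (Real.log (pr p (fun ω => X ω = a))
        - Real.log (1 / (Fintype.card α : ℝ))) := by
    intro a
    exact gibbs_ineq (pr_nonneg hp _) (by positivity) (fun _ => by positivity)
  have h2 : ∑ a : α, (pr p (fun ω => X ω = a) - 1 / (Fintype.card α : ℝ)) = 0 := by
    rw [Finset.sum_sub_distrib, sum_pr_eq_one hp1 X, Finset.sum_const, Finset.card_univ,
      nsmul_eq_mul]
    field_simp
    ring
  have h3 : ∑ a : α, (pr p (fun ω => X ω = a) * (Real.log (pr p (fun ω => X ω = a))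
        - Real.log (1 / (Fintype.card α : ℝ))))
      = (∑ a : α, pr p (fun ω => X ω = a) * Real.log (pr p (fun ω => X ω = a)))
        + Real.log (Fintype.card α : ℝ) := by
    have : ∀ a : α, pr p (fun ω => X ω = a) * (Real.log (pr p (fun ω => X ω = a))
        - Real.log (1 / (Fintype.card α : ℝ)))
        = pr p (fun ω => X ω = a) * Real.log (pr p (fun ω => X ω = a))
          + pr p (fun ω => X ω = a) * Real.log (Fintype.card α : ℝ) := by
      intro a
      rw [one_div, Real.log_inv]
      ring
    rw [Finset.sum_congr rfl fun a _ => this a, Finset.sum_add_distrib, ← Finset.sum_mul,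
      sum_pr_eq_one hp1 X, one_mul]
  have hent : ent q p X * Real.log q
      = -∑ a, pr p (fun ω => X ω = a) * Real.log (pr p (fun ω => X ω = a)) := by
    rw [ent_eq, Finset.sum_mul,
      Finset.sum_congr rfl (fun a _ => phi_log hq (pr p (fun ω => X ω = a))),
      Finset.sum_neg_distrib]
  have hsum := Finset.sum_le_sum fun a (_ : a ∈ Finset.univ) => h1 a
  rw [h2, h3] at hsum
  have hlogbN : Real.logb q (Fintype.card α : ℝ) * Real.log q = Real.log (Fintype.card α : ℝ) := by
    unfold Real.logb
    exact div_mul_cancel₀ _ (ne_of_gt (Real.log_pos hq))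
  have hlq : (0:ℝ) < Real.log q := Real.log_pos hq
  nlinarith [hsum, hent, hlogbN]

lemma ent_uniform (hq : 1 < (q : ℝ)) {X : Ω → α}
    (h : ∀ a, pr p (fun ω => X ω = a) = 1 / (Fintype.card α : ℝ)) (hpos : 0 < Fintype.card α) :
    ent q p X = Real.logb q (Fintype.card α : ℝ) := by
  have hN : ((Fintype.card α : ℝ)) ≠ 0 := by positivity
  rw [ent_eq]
  rw [Finset.sum_congr rfl (fun a _ => by rw [h a]), Finset.sum_const, Finset.card_univ,
    nsmul_eq_mul]
  unfold phi
  rw [one_div, Real.logb_inv]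
  field_simp

lemma det_to_fun [Nonempty α] {A : Ω → α} {B : Ω → β}
    (h : ∀ ω ω', 0 < p ω → 0 < p ω' → B ω = B ω' → A ω = A ω') :
    ∃ f : β → α, ∀ ω, 0 < p ω → A ω = f (B ω) := by
  refine ⟨fun b => if hb : ∃ ω, 0 < p ω ∧ B ω = b then A hb.choose else Classical.arbitrary α, ?_⟩
  intro ω hω
  have hb : ∃ ω', 0 < p ω' ∧ B ω' = B ω := ⟨ω, hω, rfl⟩
  simp only [dif_pos hb]
  exact (h hb.choose ω hb.choose_spec.1 hω hb.choose_spec.2).symm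

lemma uniform_push {G C : Type*} [AddCommGroup G] [Fintype G] [AddCommGroup C] [Fintype C]
    (hp1 : ∑ ω, p ω = 1) (g : G →+ C) (hg : Function.Surjective g) (T : Ω → G)
    (hT : ∀ x, pr p (fun ω => T ω = x) = 1 / (Fintype.card G : ℝ)) (c : C) :
    pr p (fun ω => g (T ω) = c) = 1 / (Fintype.card C : ℝ) := by
  have hconst : ∀ c c' : C, pr p (fun ω => g (T ω) = c) = pr p (fun ω => g (T ω) = c') := by
    intro c c'
    obtain ⟨d, hd⟩ := hg (c' - c)
    rw [prComp T (fun x => g x = c), prComp T (fun x => g x = c')]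
    have h1 : ∀ cc : C, (∑ x, if g x = cc then pr p (fun ω => T ω = x) else 0)
        = ∑ x, if g x = cc then (1 / (Fintype.card G : ℝ)) else 0 :=
      fun cc => Finset.sum_congr rfl fun x _ => by rw [hT]
    rw [h1, h1]
    rw [← Equiv.sum_comp (Equiv.addRight d)
      (fun x => if g x = c' then (1 / (Fintype.card G : ℝ)) else 0)]
    refine Finset.sum_congr rfl fun x _ => ?_
    have hgx : g ((Equiv.addRight d) x) = g x + (c' - c) := by
      simp [Equiv.coe_addRight, map_add, hd]
    have hiff : (g ((Equiv.addRight d) x) = c') ↔ (g x = c) := by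
      rw [hgx]
      constructor
      · intro hh
        have h2 := congrArg (fun y => y - (c' - c)) hh
        simpa [sub_sub_cancel] using h2
      · intro hh
        rw [hh]
        abel
    by_cases hx : g x = c
    · rw [if_pos hx, if_pos (hiff.mpr hx)]
    · rw [if_neg hx, if_neg (fun hcc => hx (hiff.mp hcc))]
  have hsum := sum_pr_eq_one hp1 (fun ω => g (T ω))
  have hcc : ∑ c' : C, pr p (fun ω => g (T ω) = c')
      = (Fintype.card C : ℝ) * pr p (fun ω => g (T ω) = c) := by
    rw [Finset.sum_congr rfl (fun c' _ => hconst c' c), Finset.sum_const, Finset.card_univ,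
      nsmul_eq_mul]
  have hCpos : (0:ℝ) < (Fintype.card C : ℝ) := by exact_mod_cast Fintype.card_pos
  rw [hcc] at hsum
  field_simp
  linarith [hsum]

lemma pr_map_indep {A : Ω → α} {B : Ω → β}
    (h : ∀ a b, pr p (fun ω => A ω = a ∧ B ω = b)
      = pr p (fun ω => A ω = a) * pr p (fun ω => B ω = b))
    (f : α → γ) (g : β → δ) (u : γ) (v : δ) :
    pr p (fun ω => f (A ω) = u ∧ g (B ω) = v)
      = pr p (fun ω => f (A ω) = u) * pr p (fun ω => g (B ω) = v) := by
  have hT := prComp (p := p) (fun ω => (A ω, B ω)) (fun c => f c.1 = u ∧ g c.2 = v)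
  have h0 : pr p (fun ω => f (A ω) = u ∧ g (B ω) = v)
      = pr p (fun ω => (fun c : α × β => f c.1 = u ∧ g c.2 = v) ((A ω, B ω))) := rfl
  rw [h0, hT, Fintype.sum_prod_type, prComp A (fun a => f a = u), prComp B (fun b => g b = v),
    Finset.sum_mul_sum]
  refine Finset.sum_congr rfl fun a _ => Finset.sum_congr rfl fun b _ => ?_
  rw [pr_pair_eq, h a b]
  by_cases h1 : f a = u <;> by_cases h2 : g b = v <;> simp [h1, h2]

lemma sum_ite_eq_pt {A : Type*} [Fintype A] (w : A) (r : ℝ) :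
    (∑ a, if a = w then r else 0) = r := by
  rw [Finset.sum_eq_single w]
  · simp
  · intro b _ hb
    simp [hb]
  · simp

lemma sum_ite_unique {A : Type*} [Fintype A] {P : A → Prop} (a₀ : A)
    (h : ∀ a, P a ↔ a = a₀) (r : ℝ) : (∑ a, if P a then r else 0) = r := by
  rw [Finset.sum_congr rfl (fun a _ => if_congr (h a) rfl rfl)]
  exact sum_ite_eq_pt a₀ r

lemma sum_ite_prod {A B : Type*} [Fintype A] [Fintype B] (PA : A → Prop) (PB : B → Prop)
    (r : ℝ) : (∑ x : A × B, if PA x.1 ∧ PB x.2 then r else 0)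
      = (∑ a : A, if PA a then (1 : ℝ) else 0) * (∑ b : B, if PB b then r else 0) := by
  rw [Fintype.sum_prod_type, Finset.sum_mul_sum]
  refine Finset.sum_congr rfl fun a _ => Finset.sum_congr rfl fun b _ => ?_
  by_cases h1 : PA a <;> by_cases h2 : PB b <;> simp [h1, h2]

lemma sum_ite_fst {A B : Type*} [Fintype A] [Fintype B] (PA : A → Prop) (r : ℝ) :
    (∑ x : A × B, if PA x.1 then r else 0)
      = (Fintype.card B : ℝ) * (∑ a, if PA a then r else 0) := by
  rw [Fintype.sum_prod_type, Finset.mul_sum]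
  refine Finset.sum_congr rfl fun a _ => ?_
  have : (∑ y : B, if PA (a, y).1 then r else 0) = ∑ _y : B, if PA a then r else 0 := rfl
  rw [this, Finset.sum_const, Finset.card_univ, nsmul_eq_mul]

lemma sum_ite_snd {A B : Type*} [Fintype A] [Fintype B] (PB : B → Prop) (r : ℝ) :
    (∑ x : A × B, if PB x.2 then r else 0)
      = (Fintype.card A : ℝ) * (∑ b, if PB b then r else 0) := by
  rw [Fintype.sum_prod_type]
  have : ∀ a : A, (∑ y : B, if PB (a, y).2 then r else 0) = ∑ b : B, if PB b then r else 0 :=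
    fun a => rfl
  rw [Finset.sum_congr rfl (fun a _ => this a), Finset.sum_const, Finset.card_univ,
    nsmul_eq_mul]

lemma pr_equiv_transfer {A B : Type*} [Fintype A] [Fintype B] (e : A ≃ B) (r : ℝ)
    (E : B → Prop) :
    pr (fun _ : B => r) E = pr (fun _ : A => r) (fun a => E (e a)) := by
  unfold pr
  exact (Equiv.sum_comp e (fun b => if E b then r else 0)).symm

end SecAggLib

/-- **Theorem 1 (optimal rate region, secure aggregation with an oblivious server).**
Converse: every protocol satisfying correctness and server security (user security
not needed) has `L_X ≥ L`, `L_Y ≥ L`, `H(Z_k) ≥ 2L` for every user `k`, and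
`H(Z_Σ) ≥ K·L` (hence `L_Z ≥ 2L` and `L_{Z_Σ} ≥ K·L`, i.e. `R_X ≥ 1`, `R_Y ≥ 1`,
`R_Z ≥ 2`, `R_{Z_Σ} ≥ K`).
Achievability: there is a protocol with `L = 1`, `L_X = L_Y = 1`, keys in `F²` and
source key in `F^K`, satisfying correctness, server security and user security.
Hence the optimal rate region is exactly
`{(R_X, R_Y, R_Z, R_{Z_Σ}) : R_X ≥ 1, R_Y ≥ 1, R_Z ≥ 2, R_{Z_Σ} ≥ K}`.
Entropies/mutual informations are in q-ary units, `q = |F|`. -/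
theorem theorem1_optimal_rate_region
    (F : Type) [Field F] [Fintype F] (K : ℕ) (hK : 2 ≤ K) :
    -- Converse
    (∀ (L LX LY LZ LZS : ℕ), 1 ≤ L →
      ∀ (Ω : Type) [Fintype Ω], ∀ (p : Ω → ℝ),
      (∀ ω, 0 ≤ p ω) → (∑ ω, p ω) = 1 →
      ∀ (W : Fin K → Ω → Fin L → F) (Z : Fin K → Ω → Fin LZ → F)
        (ZS : Ω → Fin LZS → F)
        (X : Fin K → Ω → Fin LX → F) (Y : Fin K → Ω → Fin LY → F),
      -- inputs i.i.d. uniform on F^L and independent of the keys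
      (∀ (w : Fin K → Fin L → F) (z : Fin K → Fin LZ → F),
        pr p (fun ω => (∀ k, W k ω = w k) ∧ (∀ k, Z k ω = z k))
          = (1 / (Fintype.card F : ℝ) ^ L) ^ K * pr p (fun ω => ∀ k, Z k ω = z k)) →
      -- the keys are deterministic functions of the source key
      (∀ k, ∃ g : (Fin LZS → F) → Fin LZ → F, ∀ ω, Z k ω = g (ZS ω)) →
      -- deterministic encoders X_k = φ_k(W_k, Z_k)
      (∀ k, ∃ φ : (Fin L → F) → (Fin LZ → F) → Fin LX → F,
        ∀ ω, X k ω = φ (W k ω) (Z k ω)) →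
      -- deterministic server maps Y_k = ψ_k(X_1, …, X_K)
      (∀ k, ∃ ψ : (Fin K → Fin LX → F) → Fin LY → F, ∀ ω, Y k ω = ψ (fun u => X u ω)) →
      -- correctness: H(Σ_u W_u | Y_k, W_k, Z_k) = 0
      (∀ k, condEnt (Fintype.card F) p (fun ω => ∑ u, W u ω)
          (fun ω => (Y k ω, W k ω, Z k ω)) = 0) →
      -- server security: I(W_1, …, W_K ; X_1, …, X_K) = 0
      (mutInf (Fintype.card F) p (fun ω => fun k => W k ω)
          (fun ω => fun k => X k ω) = 0) →
      (L ≤ LX ∧ L ≤ LY ∧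
        (∀ k : Fin K, 2 * (L : ℝ) ≤ ent (Fintype.card F) p (Z k)) ∧
        (K : ℝ) * (L : ℝ) ≤ ent (Fintype.card F) p ZS ∧
        2 * L ≤ LZ ∧ K * L ≤ LZS ∧
        1 ≤ (LX : ℝ) / (L : ℝ) ∧ 1 ≤ (LY : ℝ) / (L : ℝ) ∧
        2 ≤ (LZ : ℝ) / (L : ℝ) ∧ (K : ℝ) ≤ (LZS : ℝ) / (L : ℝ)))
    ∧
    -- Achievability: a protocol with L = 1, L_X = L_Y = 1, Z_k ∈ F², Z_Σ ∈ F^K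
    (∃ (n : ℕ) (p : Fin n → ℝ)
        (W : Fin K → Fin n → F) (Z : Fin K → Fin n → Fin 2 → F)
        (ZS : Fin n → Fin K → F) (X Y : Fin K → Fin n → F),
      (∀ ω, 0 ≤ p ω) ∧ (∑ ω, p ω) = 1 ∧
      -- inputs i.i.d. uniform on F and independent of the keys
      (∀ (w : Fin K → F) (z : Fin K → Fin 2 → F),
        pr p (fun ω => (∀ k, W k ω = w k) ∧ (∀ k, Z k ω = z k))
          = (1 / (Fintype.card F : ℝ)) ^ K * pr p (fun ω => ∀ k, Z k ω = z k)) ∧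
      -- the keys are deterministic functions of the source key
      (∀ k, ∃ g : (Fin K → F) → Fin 2 → F, ∀ ω, Z k ω = g (ZS ω)) ∧
      -- deterministic encoders
      (∀ k, ∃ φ : F → (Fin 2 → F) → F, ∀ ω, X k ω = φ (W k ω) (Z k ω)) ∧
      -- deterministic server maps
      (∀ k, ∃ ψ : (Fin K → F) → F, ∀ ω, Y k ω = ψ (fun u => X u ω)) ∧
      -- correctness
      (∀ k, condEnt (Fintype.card F) p (fun ω => ∑ u, W u ω)
          (fun ω => (Y k ω, W k ω, Z k ω)) = 0) ∧
      -- server security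
      (mutInf (Fintype.card F) p (fun ω => fun k => W k ω)
          (fun ω => fun k => X k ω) = 0) ∧
      -- user security: I(W_1, …, W_K ; Y_k | Σ_u W_u, W_k, Z_k) = 0
      (∀ k, condMutInf (Fintype.card F) p (fun ω => fun u => W u ω) (Y k)
          (fun ω => (∑ u, W u ω, W k ω, Z k ω)) = 0)) := by
  classical
  have hq1 : (1 : ℝ) < (Fintype.card F : ℝ) := by exact_mod_cast Fintype.one_lt_card
  have hqn : 1 < Fintype.card F := Fintype.one_lt_card
  have hlogbpow : ∀ n : ℕ, Real.logb (Fintype.card F) ((Fintype.card F : ℝ) ^ n) = n := by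
    intro n
    rw [Real.logb_pow, Real.logb_self_eq_one hq1, mul_one]
  constructor
  · -- Converse
    intro L LX LY LZ LZS hL Ω _ p hp0 hp1 W Z ZS X Y hiid hkeys henc hserv hcorr hsec
    choose gf hgf using hkeys
    choose φf hφf using henc
    choose ψf hψf using hserv
    set Wv : Ω → (Fin K → Fin L → F) := (fun ω => fun k => W k ω) with hWvdef
    set Xv : Ω → (Fin K → Fin LX → F) := (fun ω => fun k => X k ω) with hXvdef
    have hp0' : ∀ ω, 0 ≤ p ω := hp0
    let Zv : Ω → (Fin K → Fin LZ → F) := fun ω k => Z k ω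
    have hiid' : ∀ w z, pr p (fun ω => Wv ω = w ∧ Zv ω = z)
        = (1 / (Fintype.card F : ℝ) ^ L) ^ K * pr p (fun ω => Zv ω = z) := by
      intro w z
      have h1 : pr p (fun ω => Wv ω = w ∧ Zv ω = z)
          = pr p (fun ω => (∀ k, W k ω = w k) ∧ (∀ k, Z k ω = z k)) :=
        pr_congr' fun ω => by simp [Wv, Zv, funext_iff]
      have h2 : pr p (fun ω => Zv ω = z) = pr p (fun ω => ∀ k, Z k ω = z k) :=
        pr_congr' fun ω => by simp [Zv, funext_iff]
      rw [h1, h2, hiid w z]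
    have hWuni : ∀ w, pr p (fun ω => Wv ω = w) = (1 / (Fintype.card F : ℝ) ^ L) ^ K := by
      intro w
      rw [pr_fiber Zv (fun ω => Wv ω = w),
        Finset.sum_congr rfl (fun z _ => hiid' w z), ← Finset.mul_sum,
        sum_pr_eq_one hp1 Zv, mul_one]
    have hcardG : Fintype.card (Fin K → Fin L → F) = Fintype.card F ^ (L * K) := by
      simp [Fintype.card_fun, pow_mul]
    have hWuni' : ∀ w, pr p (fun ω => Wv ω = w)
        = 1 / (Fintype.card (Fin K → Fin L → F) : ℝ) := by
      intro w
      rw [hWuni w, hcardG]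
      push_cast
      rw [div_pow, one_pow, pow_mul]
    have hdet : ∀ k : Fin K, ∀ ω ω', 0 < p ω → 0 < p ω' →
        ((Y k ω, W k ω, Z k ω) : (Fin LY → F) × (Fin L → F) × (Fin LZ → F))
          = (Y k ω', W k ω', Z k ω') → (∑ u, W u ω) = (∑ u, W u ω') := by
      intro k
      have h := hcorr k
      unfold condEnt at h
      have h2 : ent (Fintype.card F) p
          (fun ω => ((∑ u, W u ω), (Y k ω, W k ω, Z k ω)))
          = ent (Fintype.card F) p (fun ω => (Y k ω, W k ω, Z k ω)) := by linarith
      exact det_of_pair_ent_eq hq1 hp0 h2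
    have hex : ∃ z, 0 < pr p (fun ω => Zv ω = z) := by
      by_contra hc
      push_neg at hc
      have hle : ∑ z, pr p (fun ω => Zv ω = z) ≤ 0 := Finset.sum_nonpos fun z _ => hc z
      rw [sum_pr_eq_one hp1 Zv] at hle
      linarith
    obtain ⟨z₀, hz₀⟩ := hex
    have hreal : ∀ (z : Fin K → Fin LZ → F), 0 < pr p (fun ω => Zv ω = z) →
        ∀ w : Fin K → Fin L → F, ∃ ω, 0 < p ω ∧ Wv ω = w ∧ Zv ω = z := by
      intro z hz w
      have hpos : 0 < pr p (fun ω => Wv ω = w ∧ Zv ω = z) := by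
        rw [hiid' w z]
        positivity
      exact pr_pos_elim hp0 hpos
    have hk' : ∀ k : Fin K, ∃ k' : Fin K, k' ≠ k := by
      intro k
      refine Fintype.exists_ne_of_one_lt_card ?_ k
      simp only [Fintype.card_fin]
      omega
    -- key injectivity lemma
    have key : ∀ (k : Fin K) (z : Fin K → Fin LZ → F), 0 < pr p (fun ω => Zv ω = z) →
        Function.Injective (fun v : Fin L → F => φf k v (z k)) := by
      intro k z hz v v' heq
      simp only at heq
      obtain ⟨k', hk'ne⟩ := hk' k
      obtain ⟨ω₁, hω₁, hW₁, hZ₁⟩ := hreal z hz (Function.update (fun _ => (0 : Fin L → F)) k v)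
      obtain ⟨ω₂, hω₂, hW₂, hZ₂⟩ := hreal z hz (Function.update (fun _ => (0 : Fin L → F)) k v')
      have hWk1 : ∀ u, W u ω₁ = Function.update (fun _ => (0 : Fin L → F)) k v u :=
        fun u => congrFun hW₁ u
      have hWk2 : ∀ u, W u ω₂ = Function.update (fun _ => (0 : Fin L → F)) k v' u :=
        fun u => congrFun hW₂ u
      have hZk1 : ∀ u, Z u ω₁ = z u := fun u => congrFun hZ₁ u
      have hZk2 : ∀ u, Z u ω₂ = z u := fun u => congrFun hZ₂ u
      have hX : ∀ u, X u ω₁ = X u ω₂ := by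
        intro u
        rw [hφf u ω₁, hφf u ω₂, hWk1 u, hWk2 u, hZk1 u, hZk2 u]
        by_cases hu : u = k
        · subst hu
          simpa [Function.update_self] using heq
        · simp [Function.update_of_ne hu]
      have hY : Y k' ω₁ = Y k' ω₂ := by
        have hfe : (fun u => X u ω₁) = (fun u => X u ω₂) := funext hX
        rw [hψf k' ω₁, hψf k' ω₂, hfe]
      have htr : ((Y k' ω₁, W k' ω₁, Z k' ω₁) : (Fin LY → F) × (Fin L → F) × (Fin LZ → F))
          = (Y k' ω₂, W k' ω₂, Z k' ω₂) := by
        rw [hY, hWk1 k', hWk2 k', hZk1 k', hZk2 k']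
        simp [Function.update_of_ne hk'ne]
      have hsum := hdet k' ω₁ ω₂ hω₁ hω₂ htr
      have hs1 : (∑ u, W u ω₁) = v := by
        rw [Finset.sum_congr rfl fun u _ => hWk1 u,
          Finset.sum_update_of_mem (Finset.mem_univ k)]
        simp
      have hs2 : (∑ u, W u ω₂) = v' := by
        rw [Finset.sum_congr rfl fun u _ => hWk2 u,
          Finset.sum_update_of_mem (Finset.mem_univ k)]
        simp
      rw [hs1, hs2] at hsum
      exact hsum
    have k₀ : Fin K := ⟨0, by omega⟩
    have hcastle : ∀ {m m' : ℕ}, Fintype.card F ^ m ≤ Fintype.card F ^ m' → m ≤ m' := by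
      intro m m' h
      exact (Nat.pow_le_pow_iff_right hqn).mp h
    have hLX : L ≤ LX := by
      have hinj := key k₀ z₀ hz₀
      have hcard := Fintype.card_le_of_injective _ hinj
      simp only [Fintype.card_fun, Fintype.card_fin] at hcard
      exact hcastle hcard
    have hLY : L ≤ LY := by
      obtain ⟨k', hk'ne⟩ := hk' k₀
      set wfun : (Fin L → F) → (Fin K → Fin L → F) :=
        fun v => Function.update (fun _ => (0 : Fin L → F)) k₀ v with hwfun
      set ymap : (Fin L → F) → (Fin LY → F) :=
        fun v => ψf k' (fun u => φf u (wfun v u) (z₀ u)) with hymap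
      have hinj : Function.Injective ymap := by
        intro v v' heq
        obtain ⟨ω₁, hω₁, hW₁, hZ₁⟩ := hreal z₀ hz₀ (wfun v)
        obtain ⟨ω₂, hω₂, hW₂, hZ₂⟩ := hreal z₀ hz₀ (wfun v')
        have hWk1 : ∀ u, W u ω₁ = wfun v u := fun u => congrFun hW₁ u
        have hWk2 : ∀ u, W u ω₂ = wfun v' u := fun u => congrFun hW₂ u
        have hZk1 : ∀ u, Z u ω₁ = z₀ u := fun u => congrFun hZ₁ u
        have hZk2 : ∀ u, Z u ω₂ = z₀ u := fun u => congrFun hZ₂ u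
        have hXω1 : (fun u => X u ω₁) = (fun u => φf u (wfun v u) (z₀ u)) := by
          funext u
          rw [hφf u ω₁, hWk1 u, hZk1 u]
        have hXω2 : (fun u => X u ω₂) = (fun u => φf u (wfun v' u) (z₀ u)) := by
          funext u
          rw [hφf u ω₂, hWk2 u, hZk2 u]
        have hY1 : Y k' ω₁ = ymap v := by
          rw [hψf k' ω₁, hXω1, hymap]
        have hY2 : Y k' ω₂ = ymap v' := by
          rw [hψf k' ω₂, hXω2, hymap]
        have htr : ((Y k' ω₁, W k' ω₁, Z k' ω₁) : (Fin LY → F) × (Fin L → F) × (Fin LZ → F))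
            = (Y k' ω₂, W k' ω₂, Z k' ω₂) := by
          rw [hY1, hY2, heq, hWk1 k', hWk2 k', hZk1 k', hZk2 k']
          simp [wfun, Function.update_of_ne hk'ne]
        have hsum := hdet k' ω₁ ω₂ hω₁ hω₂ htr
        have hs1 : (∑ u, W u ω₁) = v := by
          rw [Finset.sum_congr rfl fun u _ => hWk1 u, hwfun,
            Finset.sum_update_of_mem (Finset.mem_univ k₀)]
          simp
        have hs2 : (∑ u, W u ω₂) = v' := by
          rw [Finset.sum_congr rfl fun u _ => hWk2 u, hwfun,
            Finset.sum_update_of_mem (Finset.mem_univ k₀)]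
          simp
        rw [hs1, hs2] at hsum
        exact hsum
      have hcard := Fintype.card_le_of_injective _ hinj
      simp only [Fintype.card_fun, Fintype.card_fin] at hcard
      exact hcastle hcard
    -- recovery of W k from (X k, Z k)
    have hrecrel : ∀ k : Fin K, ∀ ω ω', 0 < p ω → 0 < p ω' →
        ((X k ω, Z k ω) : (Fin LX → F) × (Fin LZ → F)) = (X k ω', Z k ω') →
        W k ω = W k ω' := by
      intro k ω ω' hω hω' hEq
      have hz : 0 < pr p (fun ω'' => Zv ω'' = Zv ω) := pr_pos_of hp0 hω rfl
      have hinj := key k (Zv ω) hz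
      apply hinj
      have hxx : X k ω = X k ω' := congrArg Prod.fst hEq
      have hzz : Z k ω' = Z k ω := (congrArg Prod.snd hEq).symm
      show φf k (W k ω) (Z k ω) = φf k (W k ω') (Z k ω)
      rw [← hφf k ω, hxx, hφf k ω', hzz]
    have hf1ex : ∀ k : Fin K, ∃ f : (Fin LX → F) × (Fin LZ → F) → (Fin L → F),
        ∀ ω, 0 < p ω → W k ω = f (X k ω, Z k ω) := by
      intro k
      exact det_to_fun (A := W k) (B := fun ω => (X k ω, Z k ω))
        (fun ω ω' h h' hB => hrecrel k ω ω' h h' hB)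
    choose f1 hf1 using hf1ex
    have hf2ex : ∀ k : Fin K, ∃ f : (Fin LY → F) × (Fin L → F) × (Fin LZ → F) → (Fin L → F),
        ∀ ω, 0 < p ω → (∑ u, W u ω) = f (Y k ω, W k ω, Z k ω) := by
      intro k
      exact det_to_fun (A := fun ω => ∑ u, W u ω) (B := fun ω => (Y k ω, W k ω, Z k ω))
        (fun ω ω' h h' hB => hdet k ω ω' h h' hB)
    choose f2 hf2 using hf2ex
    -- server security factorization
    have hfact : ∀ w x, pr p (fun ω => Wv ω = w ∧ Xv ω = x)
        = pr p (fun ω => Wv ω = w) * pr p (fun ω => Xv ω = x) := by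
      have h0 : ent (Fintype.card F) p Wv + ent (Fintype.card F) p Xv
          - ent (Fintype.card F) p (fun ω => (Wv ω, Xv ω)) = 0 := by
        have h := hsec
        unfold mutInf at h
        linarith
      exact indep_of_mutInf_zero hq1 hp0 hp1 h0
    -- H(Z k) ≥ 2 L
    have hZk : ∀ k : Fin K, 2 * (L : ℝ) ≤ ent (Fintype.card F) p (Z k) := by
      intro k
      set U : Ω → (Fin L → F) × (Fin L → F) := fun ω => (W k ω, ∑ u, W u ω) with hUdef
      set V : Ω → (Fin LX → F) × (Fin LY → F) := fun ω => (X k ω, Y k ω) with hVdef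
      have hgUadd : ∀ a b : (Fin K → Fin L → F),
          ((fun w => (w k, ∑ u, w u)) (a + b) : (Fin L → F) × (Fin L → F))
            = (fun w => (w k, ∑ u, w u)) a + (fun w => (w k, ∑ u, w u)) b := by
        intro a b
        simp [Prod.ext_iff, Finset.sum_add_distrib]
      let gU : (Fin K → Fin L → F) →+ (Fin L → F) × (Fin L → F) :=
        AddMonoidHom.mk' (fun w => (w k, ∑ u, w u)) hgUadd
      have hgUsurj : Function.Surjective gU := by
        rintro ⟨a, s⟩
        obtain ⟨j, hj⟩ := hk' k
        let w0 : Fin K → Fin L → F := Pi.single k a + Pi.single j (s - a)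
        have h1 : w0 k = a := by
          simp [w0, Pi.single_eq_same, Pi.single_eq_of_ne (Ne.symm hj)]
        have h2 : (∑ u, w0 u) = s := by
          rw [show (∑ u, w0 u) = ∑ u, (Pi.single k a u + Pi.single j (s - a) u) from rfl,
            Finset.sum_add_distrib, Finset.sum_pi_single', Finset.sum_pi_single']
          simp
        exact ⟨w0, Prod.ext h1 h2⟩
      have hUuni : ∀ cc : (Fin L → F) × (Fin L → F),
          pr p (fun ω => U ω = cc) = 1 / (Fintype.card ((Fin L → F) × (Fin L → F)) : ℝ) := by
        intro cc
        have h := uniform_push hp1 gU hgUsurj Wv hWuni' cc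
        exact h
      have hentU : ent (Fintype.card F) p U
          = Real.logb (Fintype.card F) ((Fintype.card F : ℝ) ^ (2 * L)) := by
        rw [ent_uniform hq1 hUuni Fintype.card_pos]
        congr 1
        have hc2 : Fintype.card ((Fin L → F) × (Fin L → F)) = Fintype.card F ^ (2 * L) := by
          simp [Fintype.card_prod, Fintype.card_fun, two_mul, pow_add]
        rw [hc2]
        push_cast
        try ring
      have hentU2 : ent (Fintype.card F) p U = 2 * (L : ℝ) := by
        rw [hentU, hlogbpow]
        push_cast
        ring
      have hUV : ∀ uu vv, pr p (fun ω => U ω = uu ∧ V ω = vv)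
          = pr p (fun ω => U ω = uu) * pr p (fun ω => V ω = vv) := by
        intro uu vv
        have h := pr_map_indep hfact (fun w => (w k, ∑ u, w u)) (fun x => (x k, ψf k x)) uu vv
        have e1 : pr p (fun ω => (fun w : Fin K → Fin L → F => (w k, ∑ u, w u)) (Wv ω) = uu
              ∧ (fun x : Fin K → Fin LX → F => (x k, ψf k x)) (Xv ω) = vv)
            = pr p (fun ω => U ω = uu ∧ V ω = vv) :=
          pr_congr' fun ω => by rw [hUdef, hVdef]; simp [Wv, Xv, hψf k ω]
        have e2 : pr p (fun ω => (fun w : Fin K → Fin L → F => (w k, ∑ u, w u)) (Wv ω) = uu)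
            = pr p (fun ω => U ω = uu) :=
          pr_congr' fun ω => by rw [hUdef]
        have e3 : pr p (fun ω => (fun x : Fin K → Fin LX → F => (x k, ψf k x)) (Xv ω) = vv)
            = pr p (fun ω => V ω = vv) :=
          pr_congr' fun ω => by rw [hVdef]; simp [Xv, hψf k ω]
        rw [e1, e2, e3] at h
        exact h
      have hentUV : ent (Fintype.card F) p (fun ω => (U ω, V ω))
          = ent (Fintype.card F) p U + ent (Fintype.card F) p V :=
        ent_pair_of_indep hp1 U V hUV
      set F2 : (Fin LZ → F) × ((Fin LX → F) × (Fin LY → F)) →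
          ((Fin L → F) × (Fin L → F)) × ((Fin LX → F) × (Fin LY → F)) :=
        (fun zv => ((f1 k (zv.2.1, zv.1), f2 k (zv.2.2, f1 k (zv.2.1, zv.1), zv.1)), zv.2))
        with hF2
      have hdet2 : ∀ ω, p ω ≠ 0 → ((U ω, V ω) :
            ((Fin L → F) × (Fin L → F)) × ((Fin LX → F) × (Fin LY → F)))
          = F2 ((Z k ω, V ω)) := by
        intro ω hω
        have hωpos : 0 < p ω := lt_of_le_of_ne (hp0 ω) (Ne.symm hω)
        have h1 := hf1 k ω hωpos
        have h2 := hf2 k ω hωpos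
        rw [hF2]
        show (U ω, V ω)
          = ((f1 k (X k ω, Z k ω), f2 k (Y k ω, f1 k (X k ω, Z k ω), Z k ω)), V ω)
        rw [← h1, ← h2]
      have hle1 : ent (Fintype.card F) p (fun ω => (U ω, V ω))
          ≤ ent (Fintype.card F) p (fun ω => (Z k ω, V ω)) :=
        ent_mono_det hq1 hp0 F2 hdet2
      have hle2 : ent (Fintype.card F) p (fun ω => (Z k ω, V ω))
          ≤ ent (Fintype.card F) p (Z k) + ent (Fintype.card F) p V :=
        ent_pair_le_add hq1 hp0 hp1 _ _
      linarith
    -- H(ZS) ≥ K * L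
    have hZS : (K : ℝ) * (L : ℝ) ≤ ent (Fintype.card F) p ZS := by
      set F3 : (Fin LZS → F) × (Fin K → Fin LX → F) →
          (Fin K → Fin L → F) × (Fin K → Fin LX → F) :=
        (fun zx => ((fun k => f1 k (zx.2 k, gf k zx.1)), zx.2)) with hF3
      have hdet3 : ∀ ω, p ω ≠ 0 → ((Wv ω, Xv ω) :
            (Fin K → Fin L → F) × (Fin K → Fin LX → F))
          = F3 ((ZS ω, Xv ω)) := by
        intro ω hω
        have hωpos : 0 < p ω := lt_of_le_of_ne (hp0 ω) (Ne.symm hω)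
        rw [hF3]
        show (Wv ω, Xv ω) = ((fun k => f1 k (Xv ω k, gf k (ZS ω))), Xv ω)
        refine Prod.ext ?_ rfl
        funext k
        show W k ω = f1 k (Xv ω k, gf k (ZS ω))
        rw [show Xv ω k = X k ω from rfl, ← hgf k ω]
        exact hf1 k ω hωpos
      have hle1 : ent (Fintype.card F) p (fun ω => (Wv ω, Xv ω))
          ≤ ent (Fintype.card F) p (fun ω => (ZS ω, Xv ω)) :=
        ent_mono_det hq1 hp0 F3 hdet3
      have hle2 : ent (Fintype.card F) p (fun ω => (ZS ω, Xv ω))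
          ≤ ent (Fintype.card F) p ZS + ent (Fintype.card F) p Xv :=
        ent_pair_le_add hq1 hp0 hp1 _ _
      have heq : ent (Fintype.card F) p (fun ω => (Wv ω, Xv ω))
          = ent (Fintype.card F) p Wv + ent (Fintype.card F) p Xv :=
        ent_pair_of_indep hp1 Wv Xv hfact
      have hentW : ent (Fintype.card F) p Wv = (K : ℝ) * (L : ℝ) := by
        rw [ent_uniform hq1 hWuni' Fintype.card_pos, hcardG]
        push_cast
        rw [hlogbpow (L * K)]
        push_cast
        ring
      linarith
    -- entropy upper bounds by description length
    have hentZle : ∀ k : Fin K, ent (Fintype.card F) p (Z k) ≤ (LZ : ℝ) := by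
      intro k
      have h := ent_le_logb_card hq1 hp0 hp1 (Z k)
      have hc : Real.logb (Fintype.card F) (Fintype.card (Fin LZ → F) : ℝ) = (LZ : ℝ) := by
        rw [show (Fintype.card (Fin LZ → F)) = Fintype.card F ^ LZ by
          simp [Fintype.card_fun]]
        push_cast
        rw [hlogbpow]
      linarith [h, hc.le, hc.ge]
    have hentZSle : ent (Fintype.card F) p ZS ≤ (LZS : ℝ) := by
      have h := ent_le_logb_card hq1 hp0 hp1 ZS
      have hc : Real.logb (Fintype.card F) (Fintype.card (Fin LZS → F) : ℝ) = (LZS : ℝ) := by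
        rw [show (Fintype.card (Fin LZS → F)) = Fintype.card F ^ LZS by
          simp [Fintype.card_fun]]
        push_cast
        rw [hlogbpow]
      linarith [h, hc.le, hc.ge]
    have hLZ : 2 * L ≤ LZ := by
      have h1 := hZk k₀
      have h2 := hentZle k₀
      have : ((2 * L : ℕ) : ℝ) ≤ (LZ : ℝ) := by push_cast; linarith
      exact_mod_cast this
    have hLZS : K * L ≤ LZS := by
      have : ((K * L : ℕ) : ℝ) ≤ (LZS : ℝ) := by push_cast; linarith [hZS, hentZSle]
      exact_mod_cast this
    have hLpos : (0 : ℝ) < (L : ℝ) := by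
      have : (1 : ℝ) ≤ (L : ℝ) := by exact_mod_cast hL
      linarith
    refine ⟨hLX, hLY, hZk, hZS, hLZ, hLZS, ?_, ?_, ?_, ?_⟩
    · rw [le_div_iff₀ hLpos, one_mul]
      exact_mod_cast hLX
    · rw [le_div_iff₀ hLpos, one_mul]
      exact_mod_cast hLY
    · rw [le_div_iff₀ hLpos]
      have : ((2 * L : ℕ) : ℝ) ≤ (LZ : ℝ) := by exact_mod_cast hLZ
      push_cast at this
      linarith
    · rw [le_div_iff₀ hLpos]
      have : ((K * L : ℕ) : ℝ) ≤ (LZS : ℝ) := by exact_mod_cast hLZS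
      push_cast at this
      linarith
  · -- Achievability
    have hFne : Nonempty F := ⟨0⟩
    set N := Fintype.card ((Fin K → F) × (Fin K → F)) with hNdef
    let e : ((Fin K → F) × (Fin K → F)) ≃ Fin N := Fintype.equivFin _
    set p : Fin N → ℝ := fun _ => 1 / (N : ℝ) with hp
    set p₀ : ((Fin K → F) × (Fin K → F)) → ℝ := fun _ => 1 / (N : ℝ) with hp₀
    have hNpos : 0 < N := Fintype.card_pos
    have hNr : (0:ℝ) < (N : ℝ) := by exact_mod_cast hNpos
    have hcardN : (N : ℝ) = (Fintype.card F : ℝ) ^ K * (Fintype.card F : ℝ) ^ K := by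
      rw [hNdef]
      push_cast [Fintype.card_prod, Fintype.card_fun, Fintype.card_fin]
      ring
    have hqKr : ((Fintype.card F : ℝ) ^ K) ≠ 0 := by positivity
    have hcardA : ((Fintype.card (Fin K → F) : ℝ)) = (Fintype.card F : ℝ) ^ K := by
      push_cast [Fintype.card_fun, Fintype.card_fin]
      ring
    have hp0' : ∀ ω, 0 ≤ p ω := fun ω => by rw [hp]; positivity
    have hp1' : (∑ ω, p ω) = 1 := by
      rw [hp]
      rw [Finset.sum_const, Finset.card_univ, Fintype.card_fin, nsmul_eq_mul]
      field_simp
    have htrans : ∀ E : Fin N → Prop,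
        pr (fun _ : Fin N => 1 / (N:ℝ)) E = pr p₀ (fun x => E (e x)) :=
      fun E => pr_equiv_transfer e (1 / (N:ℝ)) E
    have hp0₀ : ∀ x, 0 ≤ p₀ x := fun x => by rw [hp₀]; positivity
    -- basic uniform computations on the product space
    have c_point : ∀ x₀, pr p₀ (fun x => x = x₀) = 1 / (N:ℝ) := by
      intro x₀
      rw [hp₀]
      unfold pr
      exact sum_ite_eq_pt x₀ _
    have c_unique : ∀ (P : ((Fin K → F) × (Fin K → F)) → Prop) x₀,
        (∀ x, P x ↔ x = x₀) → pr p₀ P = 1 / (N:ℝ) := by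
      intro P x₀ h
      rw [pr_congr' h]
      exact c_point x₀
    have c_false : ∀ (P : ((Fin K → F) × (Fin K → F)) → Prop),
        (∀ x, ¬ P x) → pr p₀ P = 0 := by
      intro P h
      rw [pr_congr' (E' := fun _ => False) (fun x => by simp [h x])]
      exact pr_false
    have c_fst : ∀ a : Fin K → F,
        pr p₀ (fun x => x.1 = a) = (Fintype.card F : ℝ) ^ K * (1 / (N:ℝ)) := by
      intro a
      rw [pr_fiber (fun x : (Fin K → F) × (Fin K → F) => x.2) (fun x => x.1 = a)]
      have hterm : ∀ b, pr p₀ (fun x => x.1 = a ∧ x.2 = b) = 1 / (N:ℝ) := by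
        intro b
        exact c_unique _ (a, b) (fun x => by
          constructor
          · rintro ⟨h1, h2⟩
            exact Prod.ext h1 h2
          · rintro rfl
            exact ⟨rfl, rfl⟩)
      rw [Finset.sum_congr rfl fun b _ => hterm b, Finset.sum_const, Finset.card_univ,
        nsmul_eq_mul, hcardA]
    have c_snd : ∀ b : Fin K → F,
        pr p₀ (fun x => x.2 = b) = (Fintype.card F : ℝ) ^ K * (1 / (N:ℝ)) := by
      intro b
      rw [pr_fiber (fun x : (Fin K → F) × (Fin K → F) => x.1) (fun x => x.2 = b)]
      have hterm : ∀ a, pr p₀ (fun x => x.2 = b ∧ x.1 = a) = 1 / (N:ℝ) := by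
        intro a
        exact c_unique _ (a, b) (fun x => by
          constructor
          · rintro ⟨h1, h2⟩
            exact Prod.ext h2 h1
          · rintro rfl
            exact ⟨rfl, rfl⟩)
      rw [Finset.sum_congr rfl fun a _ => hterm a, Finset.sum_const, Finset.card_univ,
        nsmul_eq_mul, hcardA]
    have c_X : ∀ xb : Fin K → F,
        pr p₀ (fun x => (fun k => x.1 k + x.2 k) = xb)
          = (Fintype.card F : ℝ) ^ K * (1 / (N:ℝ)) := by
      intro xb
      rw [pr_fiber (fun x : (Fin K → F) × (Fin K → F) => x.1)
        (fun x => (fun k => x.1 k + x.2 k) = xb)]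
      have hterm : ∀ a, pr p₀ (fun x => (fun k => x.1 k + x.2 k) = xb ∧ x.1 = a)
          = 1 / (N:ℝ) := by
        intro a
        refine c_unique _ (a, fun k => xb k - a k) (fun x => ?_)
        constructor
        · rintro ⟨h1, h2⟩
          refine Prod.ext h2 (funext fun k => ?_)
          have hk := congrFun h1 k
          have h2k := congrFun h2 k
          show x.2 k = xb k - a k
          rw [← hk, h2k]
          ring
        · rintro rfl
          refine ⟨funext fun k => ?_, rfl⟩
          simp
      rw [Finset.sum_congr rfl fun a _ => hterm a, Finset.sum_const, Finset.card_univ,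
        nsmul_eq_mul, hcardA]
    have c_WX : ∀ (a xb : Fin K → F),
        pr p₀ (fun x => x.1 = a ∧ (fun k => x.1 k + x.2 k) = xb) = 1 / (N:ℝ) := by
      intro a xb
      refine c_unique _ (a, fun k => xb k - a k) (fun x => ?_)
      constructor
      · rintro ⟨h1, h2⟩
        refine Prod.ext h1 (funext fun k => ?_)
        have hk := congrFun h2 k
        have h1k := congrFun h1 k
        show x.2 k = xb k - a k
        rw [← hk, h1k]
        ring
      · rintro rfl
        refine ⟨rfl, funext fun k => ?_⟩
        simp
    refine ⟨N, p,
      fun k ω => (e.symm ω).1 k,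
      fun k ω => ![(e.symm ω).2 k, ∑ u, (e.symm ω).2 u],
      fun ω => (e.symm ω).2,
      fun k ω => (e.symm ω).1 k + (e.symm ω).2 k,
      fun k ω => ∑ u, ((e.symm ω).1 u + (e.symm ω).2 u),
      hp0', hp1', ?_, ?_, ?_, ?_, ?_, ?_, ?_⟩
    · -- iid + independence from keys
      intro w z
      rw [hp, htrans, htrans]
      have e1 : pr p₀ (fun x =>
            (∀ k, (fun k (ω : Fin N) => (e.symm ω).1 k) k (e x) = w k)
            ∧ (∀ k, (fun k (ω : Fin N) => (![(e.symm ω).2 k, ∑ u, (e.symm ω).2 u] : Fin 2 → F))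
                k (e x) = z k))
          = pr p₀ (fun x => x.1 = w
            ∧ (∀ k, (![x.2 k, ∑ u, x.2 u] : Fin 2 → F) = z k)) :=
        pr_congr' fun x => by simp [funext_iff]
      have e2 : pr p₀ (fun x =>
            ∀ k, (fun k (ω : Fin N) => (![(e.symm ω).2 k, ∑ u, (e.symm ω).2 u] : Fin 2 → F))
              k (e x) = z k)
          = pr p₀ (fun x => ∀ k, (![x.2 k, ∑ u, x.2 u] : Fin 2 → F) = z k) :=
        pr_congr' fun x => by simp
      rw [e1, e2]
      have hL : pr p₀ (fun x => x.1 = w ∧ (∀ k, (![x.2 k, ∑ u, x.2 u] : Fin 2 → F) = z k))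
          = ∑ b : Fin K → F,
            (if (∀ k, (![b k, ∑ u, b u] : Fin 2 → F) = z k) then 1 / (N:ℝ) else 0) := by
        rw [pr_fiber (fun x : (Fin K → F) × (Fin K → F) => x.2)]
        refine Finset.sum_congr rfl fun b _ => ?_
        by_cases hb : (∀ k, (![b k, ∑ u, b u] : Fin 2 → F) = z k)
        · rw [if_pos hb]
          refine c_unique _ (w, b) (fun x => ?_)
          constructor
          · rintro ⟨⟨h1, _⟩, h2⟩
            exact Prod.ext h1 h2
          · rintro rfl
            exact ⟨⟨rfl, hb⟩, rfl⟩
        · rw [if_neg hb]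
          refine c_false _ (fun x => ?_)
          rintro ⟨⟨_, h2⟩, h3⟩
          exact hb (by rw [← h3]; exact h2)
      have hR : pr p₀ (fun x => ∀ k, (![x.2 k, ∑ u, x.2 u] : Fin 2 → F) = z k)
          = ∑ b : Fin K → F,
            (if (∀ k, (![b k, ∑ u, b u] : Fin 2 → F) = z k)
              then (Fintype.card F : ℝ) ^ K * (1 / (N:ℝ)) else 0) := by
        rw [pr_fiber (fun x : (Fin K → F) × (Fin K → F) => x.2)]
        refine Finset.sum_congr rfl fun b _ => ?_
        by_cases hb : (∀ k, (![b k, ∑ u, b u] : Fin 2 → F) = z k)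
        · rw [if_pos hb]
          have : pr p₀ (fun x => (∀ k, (![x.2 k, ∑ u, x.2 u] : Fin 2 → F) = z k) ∧ x.2 = b)
              = pr p₀ (fun x => x.2 = b) :=
            pr_congr' fun x => by
              constructor
              · rintro ⟨_, h2⟩
                exact h2
              · rintro rfl
                exact ⟨hb, rfl⟩
          rw [this]
          exact c_snd b
        · rw [if_neg hb]
          refine c_false _ (fun x => ?_)
          rintro ⟨h2, h3⟩
          exact hb (by rw [← h3]; exact h2)
      rw [hL, hR, Finset.mul_sum]
      refine Finset.sum_congr rfl fun b _ => ?_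
      by_cases hb : (∀ k, (![b k, ∑ u, b u] : Fin 2 → F) = z k)
      · rw [if_pos hb, if_pos hb]
        rw [div_pow, one_pow]
        field_simp
      · rw [if_neg hb, if_neg hb, mul_zero]
    · -- keys are functions of the source key
      intro k
      exact ⟨fun zs => ![zs k, ∑ u, zs u], fun ω => rfl⟩
    · -- encoders
      intro k
      refine ⟨fun w zk => w + zk 0, fun ω => ?_⟩
      simp
    · -- server maps
      intro k
      exact ⟨fun x => ∑ u, x u, fun ω => rfl⟩
    · -- correctness
      intro k
      unfold condEnt
      have h := entOfDetEmbed (q := Fintype.card F) (p := p)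
        (A := fun ω => ((∑ u, ((e.symm ω).1 u + (e.symm ω).2 u) : F),
          ((e.symm ω).1 k : F),
          (![(e.symm ω).2 k, ∑ u, (e.symm ω).2 u] : Fin 2 → F)))
        (B := fun ω => ((∑ u, (e.symm ω).1 u : F),
          ((∑ u, ((e.symm ω).1 u + (e.symm ω).2 u) : F),
           ((e.symm ω).1 k : F),
           (![(e.symm ω).2 k, ∑ u, (e.symm ω).2 u] : Fin 2 → F))))
        hp0'
        (fun t => (t.1 - t.2.2 1, t))
        (fun t t' h => congrArg Prod.snd h)
        (fun ω _ => by
          refine Prod.ext ?_ rfl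
          show (∑ u, (e.symm ω).1 u)
            = (∑ u, ((e.symm ω).1 u + (e.symm ω).2 u))
              - (![(e.symm ω).2 k, ∑ u, (e.symm ω).2 u] : Fin 2 → F) 1
          simp [Finset.sum_add_distrib])
      beta_reduce
      rw [h, sub_self]
    · -- server security
      have hfact : ∀ (a b : Fin K → F),
          pr p (fun ω => (fun k => (e.symm ω).1 k) = a
              ∧ (fun k => (e.symm ω).1 k + (e.symm ω).2 k) = b)
            = pr p (fun ω => (fun k => (e.symm ω).1 k) = a)
              * pr p (fun ω => (fun k => (e.symm ω).1 k + (e.symm ω).2 k) = b) := by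
        intro a b
        rw [hp, htrans, htrans, htrans]
        have e1 : pr p₀ (fun x => (fun k => (e.symm (e x)).1 k) = a
              ∧ (fun k => (e.symm (e x)).1 k + (e.symm (e x)).2 k) = b)
            = pr p₀ (fun x => x.1 = a ∧ (fun k => x.1 k + x.2 k) = b) :=
          pr_congr' fun x => by simp
        have e2 : pr p₀ (fun x => (fun k => (e.symm (e x)).1 k) = a)
            = pr p₀ (fun x => x.1 = a) :=
          pr_congr' fun x => by simp
        have e3 : pr p₀ (fun x => (fun k => (e.symm (e x)).1 k + (e.symm (e x)).2 k) = b)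
            = pr p₀ (fun x => (fun k => x.1 k + x.2 k) = b) :=
          pr_congr' fun x => by simp
        rw [e1, e2, e3, c_WX a b, c_fst a, c_X b, hcardN]
        field_simp
        try ring
      have hpair := ent_pair_of_indep (q := Fintype.card F) hp1'
        (fun ω => fun k => (e.symm ω).1 k)
        (fun ω => fun k => (e.symm ω).1 k + (e.symm ω).2 k) hfact
      unfold mutInf
      beta_reduce
      rw [hpair]
      ring
    · -- user security
      intro k
      unfold condMutInf
      have h1 := entOfDetEmbed (q := Fintype.card F) (p := p)
        (A := fun ω => ((∑ u, (e.symm ω).1 u : F), ((e.symm ω).1 k : F),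
          (![(e.symm ω).2 k, ∑ u, (e.symm ω).2 u] : Fin 2 → F)))
        (B := fun ω => ((∑ u, ((e.symm ω).1 u + (e.symm ω).2 u) : F),
          ((∑ u, (e.symm ω).1 u : F), ((e.symm ω).1 k : F),
           (![(e.symm ω).2 k, ∑ u, (e.symm ω).2 u] : Fin 2 → F))))
        hp0'
        (fun t => (t.1 + t.2.2 1, t))
        (fun t t' h => congrArg Prod.snd h)
        (fun ω _ => by
          refine Prod.ext ?_ rfl
          show (∑ u, ((e.symm ω).1 u + (e.symm ω).2 u))
            = (∑ u, (e.symm ω).1 u)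
              + (![(e.symm ω).2 k, ∑ u, (e.symm ω).2 u] : Fin 2 → F) 1
          simp [Finset.sum_add_distrib])
      have h2 := entOfDetEmbed (q := Fintype.card F) (p := p)
        (A := fun ω => ((fun u => (e.symm ω).1 u),
          ((∑ u, (e.symm ω).1 u : F), ((e.symm ω).1 k : F),
           (![(e.symm ω).2 k, ∑ u, (e.symm ω).2 u] : Fin 2 → F))))
        (B := fun ω => ((fun u => (e.symm ω).1 u),
          ((∑ u, ((e.symm ω).1 u + (e.symm ω).2 u) : F),
           ((∑ u, (e.symm ω).1 u : F), ((e.symm ω).1 k : F),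
            (![(e.symm ω).2 k, ∑ u, (e.symm ω).2 u] : Fin 2 → F)))))
        hp0'
        (fun t => (t.1, (t.2.1 + t.2.2.2 1, t.2)))
        (fun t t' h => by
          have ha := congrArg Prod.fst h
          have hb := congrArg (fun s => s.2.2) h
          exact Prod.ext ha hb)
        (fun ω _ => by
          refine Prod.ext rfl (Prod.ext ?_ rfl)
          show (∑ u, ((e.symm ω).1 u + (e.symm ω).2 u))
            = (∑ u, (e.symm ω).1 u)
              + (![(e.symm ω).2 k, ∑ u, (e.symm ω).2 u] : Fin 2 → F) 1
          simp [Finset.sum_add_distrib])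
      beta_reduce
      rw [h1, h2]
      ring
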